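/- If G and H are word-representable graphs with representation numbers k₁ and k₂ respectively, then G □ H has a uniform word-representant in which each letter occurs exactly k₁ + k₂ + min{|V(G)|, |V(H)|} times; in particular G □ H is (k₁ + k₂ + min{|V(G)|,|V(H)|})-word-representable. -/

import Mathlib

open SimpleGraph

variable {V : Type*}

/-- Two distinct letters `x` and `y` alternate in a word `w` if the subsequence of `w`
consisting of all occurrences of `x` and `y` is strictly alternating. -/
def Alternates [DecidableEq V] (x y : V) (w : List V) : Prop :=
  (w.filter (fun z => decide (z = x ∨ z = y))).Chain' (· ≠ ·)

/-- A word `w` represents the graph `G` if it contains every vertex at least once and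
two distinct vertices are adjacent iff they alternate in `w`. -/
def Represents [DecidableEq V] (G : SimpleGraph V) (w : List V) : Prop :=
  (∀ v : V, v ∈ w) ∧ ∀ x y : V, x ≠ y → (G.Adj x y ↔ Alternates x y w)

/-- A graph is word-representable if some word represents it. -/
def WordRepresentable [DecidableEq V] (G : SimpleGraph V) : Prop :=
  ∃ w : List V, Represents G w

/-- `l(G)`: the minimum length of a word-representant of `G`. -/
noncomputable def reprLen [DecidableEq V] (G : SimpleGraph V) : ℕ :=
  sInf {n | ∃ w : List V, Represents G w ∧ w.length = n}

/-!
Let `w₁`, `w₂` be uniform representants of `G` and `H`, let `σ` list the vertices of `G` by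
last occurrence in `w₁` and `τ` those of `H` by first occurrence in `w₂`, `n = |τ|`. The word is
`S M T`, where `S` replaces each letter `x` of `w₁` by `(x, τ₁) ⋯ (x, τₙ)`, `T` replaces each
letter `a` of `w₂` by `(σ₁, a) ⋯ (σₘ, a)`, and `M` is the sequence of blocks `σ × L` for the
pieces `L = [τ₁], rot₁ τ, [τ₂], …, rotₙ₋₁ τ, [τₙ]`, which concatenate to `τⁿ`.

Every alternation question reduces to a word over one factor, and the orders chosen for `σ`
and `τ` make the three parts of that word join without a break. Row `x` of `S M T` reads
`τ^(k₁ + n) w₂`, so `(x, a)` and `(x, b)` alternate iff `a` and `b` do in `w₂`, and every letter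
occurs `k₁ + n + k₂` times. Column `a` reads `w₁ σᵐ`, so `(x, a)` and `(y, a)` alternate iff
`x` and `y` do in `w₁`. For `x` before `y` in `σ` and `a ≠ b`, the occurrences of `(x, a)` and
`(y, b)` in `S` end with `(y, b)`, and the piece `[b]` of `M`, preceded either by `S` or by a
full rotation of `τ`, repeats `(y, b)`. Exchanging the factors gives `min (|V|, |U|)` in place
of `|U|`.
-/

open scoped List

section Alternation

variable {α β : Type*}

theorem alternates_iff_isChain [DecidableEq α] {x y : α} {w : List α} :
    Alternates x y w ↔ (w.filter fun z => decide (z = x ∨ z = y)).IsChain (· ≠ ·) :=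
  Iff.rfl

theorem alternates_comm [DecidableEq α] {x y : α} {w : List α} :
    Alternates x y w ↔ Alternates y x w := by
  simp only [alternates_iff_isChain, or_comm]

theorem alternates_filterMap_iff [DecidableEq α] [DecidableEq β] {f : β → α}
    {g : α → Option β} (hg : Function.IsPartialInv f g) (a b : β) (W : List α) :
    Alternates a b (W.filterMap g) ↔ Alternates (f a) (f b) W := by
  have hf := hg.injective
  have hfilter : W.filter (fun p => decide (p = f a ∨ p = f b)) =
      ((W.filterMap g).filter fun c => decide (c = a ∨ c = b)).map f := by
    induction W with
    | nil => rfl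
    | cons p W ih =>
      rcases hp : g p with _ | c
      · have ha : p ≠ f a := fun h => by simp [h, (hg a (f a)).2 rfl] at hp
        have hb : p ≠ f b := fun h => by simp [h, (hg b (f b)).2 rfl] at hp
        simpa [hp, ha, hb] using ih
      · obtain rfl := (hg c p).1 hp
        by_cases hc : c = a ∨ c = b <;> simpa [hp, hf.eq_iff, hc] using ih
  rw [alternates_iff_isChain, alternates_iff_isChain, hfilter, List.isChain_map]
  simp only [hf.ne_iff]

theorem count_filterMap_of_isPartialInv [BEq α] [LawfulBEq α] [BEq β] [LawfulBEq β]
    {f : β → α} {g : α → Option β} (hg : Function.IsPartialInv f g) (a : β) (W : List α) :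
    (W.filterMap g).count a = W.count (f a) := by
  induction W with
  | nil => rfl
  | cons p W ih =>
    rcases hp : g p with _ | c
    · have ha : p ≠ f a := fun h => by simp [h, (hg a (f a)).2 rfl] at hp
      simp [hp, ih, ha]
    · obtain rfl := (hg c p).1 hp
      by_cases hca : c = a
      · subst hca
        simp [hp, ih]
      · simp [hp, ih, hca, hg.injective.ne hca]

theorem alternates_map_iff [DecidableEq α] [DecidableEq β] {f : β → α} (hf : f.Injective)
    (a b : β) (w : List β) : Alternates (f a) (f b) (w.map f) ↔ Alternates a b w := by
  classical
  rw [← alternates_filterMap_iff hf.isPartialInv, List.filterMap_map]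
  simp [Function.partialInv_left hf]

theorem represents_of_total [DecidableEq α] {G : SimpleGraph α} {w : List α}
    (R : α → α → Prop) (hmem : ∀ v, v ∈ w) (htotal : ∀ x y, x ≠ y → R x y ∨ R y x)
    (hR : ∀ x y, x ≠ y → R x y → (G.Adj x y ↔ Alternates x y w)) : Represents G w :=
  ⟨hmem, fun x y hxy => (htotal x y hxy).elim (hR x y hxy) fun h => by
    rw [G.adj_comm, alternates_comm]
    exact hR y x hxy.symm h⟩

theorem Represents.map_iso [DecidableEq α] [DecidableEq β] {G : SimpleGraph α}
    {G' : SimpleGraph β} {w : List α} (h : Represents G w) (e : G ≃g G') :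
    Represents G' (w.map e) := by
  refine ⟨fun v => ?_, fun x y hxy => ?_⟩
  · obtain ⟨u, rfl⟩ := e.surjective v
    exact List.mem_map_of_mem (h.1 u)
  · obtain ⟨u, rfl⟩ := e.surjective x
    obtain ⟨v, rfl⟩ := e.surjective y
    rw [e.map_adj_iff, alternates_map_iff e.injective]
    exact h.2 u v fun huv => hxy (huv ▸ rfl)

end Alternation

section Lists

variable {α : Type*}

theorem pair_sublist_or_pair_sublist {x y : α} {l : List α} (hx : x ∈ l) (hy : y ∈ l)
    (hxy : x ≠ y) : [x, y] <+ l ∨ [y, x] <+ l := by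
  obtain ⟨s, t, rfl⟩ := List.append_of_mem hx
  rcases List.mem_append.1 hy with hs | ht
  · exact .inr ((List.singleton_sublist.2 hs).append (List.singleton_sublist.2 List.mem_cons_self))
  · have ht : y ∈ t := (List.mem_cons.1 ht).resolve_left hxy.symm
    exact .inl (((List.singleton_sublist.2 ht).cons_cons x).trans (List.sublist_append_right _ _))

theorem filter_eq_pair_of_sublist [DecidableEq α] {x y : α} {σ : List α} (hσ : σ.Nodup)
    (hxy : [x, y] <+ σ) : σ.filter (fun z => decide (z = x ∨ z = y)) = [x, y] := by
  have hsub : [x, y] <+ σ.filter (fun z => decide (z = x ∨ z = y)) := by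
    simpa using hxy.filter (fun z => decide (z = x ∨ z = y))
  refine (hsub.eq_of_length (le_antisymm hsub.length_le ?_)).symm
  refine ((hσ.filter _).subperm fun z hz => ?_).length_le
  simpa using (List.mem_filter.1 hz).2

theorem filter_filter_eq_singleton [DecidableEq α] {σ : List α} (hσ : σ.Nodup) {x y : α}
    (hy : y ∈ σ) {p : α → Bool} (hpx : p x = false) (hpy : p y = true) :
    (σ.filter p).filter (fun z => decide (z = x ∨ z = y)) = [y] := by
  rw [List.filter_filter, List.filter_congr (q := fun z => decide (z = y)), List.filter_eq,
    hσ.count, if_pos hy]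
  · rfl
  · intro z _
    by_cases hzy : z = y
    · simp [hzy, hpy]
    · by_cases hzx : z = x
      · subst hzx
        simp [hzy, hpx]
      · simp [hzx, hzy]

theorem filter_flatten_replicate [DecidableEq α] {x y : α} {σ : List α} (hσ : σ.Nodup)
    (hxy : [x, y] <+ σ) (m : ℕ) :
    (List.replicate m σ).flatten.filter (fun z => decide (z = x ∨ z = y)) =
      (List.replicate m [x, y]).flatten := by
  rw [List.filter_flatten, List.map_replicate, filter_eq_pair_of_sublist hσ hxy]

theorem head?_flatten_replicate_pair (x y : α) (m : ℕ) :
    ∀ v ∈ (List.replicate m [x, y]).flatten.head?, v = x := by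
  cases m <;> simp [List.replicate_succ]

theorem getLast?_flatten_replicate_pair (x y : α) (m : ℕ) :
    ∀ v ∈ (List.replicate m [x, y]).flatten.getLast?, v = y := by
  cases m <;> simp [List.replicate_succ']

theorem isChain_flatten_replicate_pair {x y : α} (hxy : x ≠ y) (m : ℕ) :
    (List.replicate m [x, y]).flatten.IsChain (· ≠ ·) := by
  induction m with
  | zero => simp
  | succ m ih =>
    simp only [List.replicate_succ, List.flatten_cons, List.cons_append, List.nil_append]
    rw [List.isChain_cons_cons, List.isChain_cons]
    exact ⟨hxy, fun v hv => head?_flatten_replicate_pair x y m v hv ▸ hxy.symm, ih⟩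

theorem alternates_append_iff_of_getLast? [DecidableEq α] {x y : α} (hxy : x ≠ y)
    {w v : List α} {m : ℕ}
    (hv : v.filter (fun z => decide (z = x ∨ z = y)) = (List.replicate m [x, y]).flatten)
    (hw : (w.filter fun z => decide (z = x ∨ z = y)).getLast? = some y) :
    Alternates x y (w ++ v) ↔ Alternates x y w := by
  rw [alternates_iff_isChain, alternates_iff_isChain, List.filter_append, hv,
    List.isChain_append, hw]
  refine ⟨fun h => h.1, fun h => ⟨h, isChain_flatten_replicate_pair hxy m, ?_⟩⟩
  rintro u ⟨⟩ v hv
  exact head?_flatten_replicate_pair x y m v hv ▸ hxy.symm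

theorem alternates_append_iff_of_head? [DecidableEq α] {x y : α} (hxy : x ≠ y)
    {w v : List α} {m : ℕ}
    (hv : v.filter (fun z => decide (z = x ∨ z = y)) = (List.replicate m [x, y]).flatten)
    (hw : (w.filter fun z => decide (z = x ∨ z = y)).head? = some x) :
    Alternates x y (v ++ w) ↔ Alternates x y w := by
  rw [alternates_iff_isChain, alternates_iff_isChain, List.filter_append, hv,
    List.isChain_append, hw]
  refine ⟨fun h => h.2.1, fun h => ⟨isChain_flatten_replicate_pair hxy m, h, ?_⟩⟩
  rintro u hu v ⟨⟩
  exact getLast?_flatten_replicate_pair x y m u hu ▸ hxy.symm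

theorem getLast?_filter_of_sublist_dedup [DecidableEq α] {x y : α} :
    ∀ {w : List α}, [x, y] <+ w.dedup →
      (w.filter fun z => decide (z = x ∨ z = y)).getLast? = some y
  | [], h => by simp at h
  | z :: w, h => by
    have hcons : (w.filter fun z => decide (z = x ∨ z = y)).getLast? = some y →
        ((z :: w).filter fun z => decide (z = x ∨ z = y)).getLast? = some y := by
      intro hw
      rw [List.filter_cons]
      split
      · rw [List.getLast?_cons, hw]
        rfl
      · exact hw
    by_cases hz : z ∈ w
    · rw [List.dedup_cons_of_mem hz] at h
      exact hcons (getLast?_filter_of_sublist_dedup h)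
    · rw [List.dedup_cons_of_notMem hz] at h
      rcases List.cons_sublist_cons'.1 h with h | ⟨rfl, hy⟩
      · exact hcons (getLast?_filter_of_sublist_dedup h)
      · have hne : (w.filter fun z => decide (z = x ∨ z = y)) ≠ [] :=
          List.ne_nil_of_mem (List.mem_filter.2
            ⟨List.mem_dedup.1 (List.singleton_sublist.1 hy), by simp⟩)
        apply hcons
        rw [List.getLast?_eq_some_getLast hne]
        obtain ⟨hmem, hxy⟩ := List.mem_filter.1 (List.getLast_mem hne)
        rcases of_decide_eq_true hxy with h | h
        · exact absurd (h ▸ hmem) hz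
        · rw [h]

theorem head?_filter_of_sublist_reverse_dedup_reverse [DecidableEq α] {a b : α} {w : List α}
    (h : [a, b] <+ w.reverse.dedup.reverse) :
    (w.filter fun z => decide (z = a ∨ z = b)).head? = some a := by
  have hlast := getLast?_filter_of_sublist_dedup (x := b) (y := a) (w := w.reverse)
    (by simpa using List.reverse_sublist.2 h)
  rw [List.filter_reverse, List.getLast?_reverse] at hlast
  simpa only [or_comm] using hlast

theorem flatMap_filter_const {γ : Type*} (l : List γ) (σ : List α) (p : γ → Bool) :
    l.flatMap (fun L => σ.filter fun _ => p L) = (List.replicate (l.countP p) σ).flatten := by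
  induction l with
  | nil => rfl
  | cons L l ih => by_cases hp : p L <;> simp [hp, ih, List.replicate_succ]

theorem List.Nodup.length_eq_card [Fintype α] {l : List α} (hl : l.Nodup) (hmem : ∀ a, a ∈ l) :
    l.length = Fintype.card α := by
  classical
  rw [← List.toFinset_card_of_nodup hl, ← Finset.card_univ,
    Finset.eq_univ_of_forall fun a => List.mem_toFinset.2 (hmem a)]

end Lists

section ProductWords

variable {α β : Type*}

/- `W.filterMap (partialInvMk x)` reads the word `W` along the row `{x} × β`, and
`W.filterMap (partialInvGraph φ)` along the graph of `φ`. -/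

def partialInvMk [DecidableEq α] (x : α) (p : α × β) : Option β :=
  if p.1 = x then some p.2 else none

def partialInvGraph [DecidableEq β] (φ : α → β) (p : α × β) : Option α :=
  if p.2 = φ p.1 then some p.1 else none

theorem isPartialInv_partialInvMk [DecidableEq α] (x : α) :
    Function.IsPartialInv (Prod.mk x) (partialInvMk x : α × β → Option β) := by
  rintro c ⟨z, d⟩
  simp only [partialInvMk, Prod.mk.injEq]
  aesop

theorem isPartialInv_partialInvGraph [DecidableEq β] (φ : α → β) :
    Function.IsPartialInv (fun z => (z, φ z)) (partialInvGraph φ) := by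
  rintro z ⟨y, d⟩
  simp only [partialInvGraph, Prod.mk.injEq]
  aesop

theorem partialInvMk_comp_swap [DecidableEq α] (x : α) :
    partialInvMk x ∘ Prod.swap = partialInvGraph (fun _ : β => x) :=
  rfl

theorem partialInvGraph_const_comp_swap [DecidableEq β] (a : β) :
    partialInvGraph (fun _ : α => a) ∘ Prod.swap = partialInvMk a :=
  rfl

theorem filterMap_partialInvMk_product [DecidableEq α] (x : α) (w : List α) (L : List β) :
    (w ×ˢ L).filterMap (partialInvMk x) = (List.replicate (w.count x) L).flatten := by
  induction w with
  | nil => rfl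
  | cons z w ih =>
    by_cases hz : z = x
    · subst hz
      simp [List.product_cons, List.filterMap_map, Function.comp_def, partialInvMk, ih,
        List.replicate_succ]
    · simp [List.product_cons, List.filterMap_map, Function.comp_def, partialInvMk, ih, hz]

theorem filterMap_partialInvGraph_map_mk [DecidableEq β] (φ : α → β) (z : α) (L : List β) :
    (L.map (Prod.mk z)).filterMap (partialInvGraph φ) = List.replicate (L.count (φ z)) z := by
  induction L with
  | nil => rfl
  | cons c L ih =>
    by_cases hc : c = φ z <;> simp [partialInvGraph, hc, ih, List.replicate_succ]

theorem filterMap_partialInvGraph_product [DecidableEq β] (φ : α → β) (w : List α)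
    {L : List β} (hL : L.Nodup) :
    (w ×ˢ L).filterMap (partialInvGraph φ) = w.filter fun z => φ z ∈ L := by
  induction w with
  | nil => rfl
  | cons z w ih =>
    rw [List.product_cons, List.filterMap_append, ih, filterMap_partialInvGraph_map_mk, hL.count,
      List.filter_cons]
    split_ifs <;> simp_all

end ProductWords

section RotationPieces

variable {β : Type*}

def rotationPieces (τ : List β) : List (List β) :=
  τ.take 1 :: (List.range (τ.length - 1)).flatMap
    fun j => [τ.rotate (j + 1), (τ.rotate (j + 1)).take 1]

theorem flatten_rotationPieces (τ : List β) :
    (rotationPieces τ).flatten = (List.replicate τ.length τ).flatten := by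
  have hprefix : ∀ m, m + 1 ≤ τ.length →
      (τ.take 1 :: (List.range m).flatMap
        fun j => [τ.rotate (j + 1), (τ.rotate (j + 1)).take 1]).flatten =
      (List.replicate m τ).flatten ++ τ.take (m + 1) := by
    intro m
    induction m with
    | zero => simp
    | succ m ih =>
      intro hm
      have hrot : τ.rotate (m + 1) = τ.drop (m + 1) ++ τ.take (m + 1) :=
        List.rotate_eq_drop_append_take (by omega)
      have htake : (τ.rotate (m + 1)).take 1 = (τ.drop (m + 1)).take 1 := by
        rw [hrot, List.take_append_of_le_length (by simp; omega)]
      rw [List.range_succ, List.flatMap_append, ← List.cons_append, List.flatten_append,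
        ih (by omega), List.replicate_succ', List.flatten_append, List.flatMap_singleton, htake,
        hrot, List.take_add (i := m + 1) (j := 1)]
      simp only [List.flatten_cons, List.flatten_nil, List.append_nil, List.append_assoc]
      rw [← List.append_assoc (τ.take (m + 1)), List.take_append_drop]
  rcases hn : τ.length with _ | n
  · simp [List.length_eq_zero_iff.1 hn, rotationPieces]
  · rw [rotationPieces, hn, Nat.add_sub_cancel, hprefix n (by omega),
      List.take_of_length_le (by omega), List.replicate_succ', List.flatten_concat]

theorem nodup_of_mem_rotationPieces {τ : List β} (hτ : τ.Nodup) {L : List β}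
    (hL : L ∈ rotationPieces τ) : L.Nodup := by
  simp only [rotationPieces, List.mem_cons, List.mem_flatMap, List.not_mem_nil, or_false] at hL
  rcases hL with rfl | ⟨j, -, rfl | rfl⟩
  · exact (List.take_sublist _ _).nodup hτ
  · exact List.nodup_rotate.2 hτ
  · exact (List.take_sublist _ _).nodup (List.nodup_rotate.2 hτ)

theorem rotationPieces_eq_of_mem {τ : List β} {b : β} (hb : b ∈ τ) :
    (∃ B, rotationPieces τ = [b] :: B) ∨
      ∃ j A B, rotationPieces τ = A ++ τ.rotate j :: [b] :: B := by
  obtain ⟨s, t, rfl⟩ := List.append_of_mem hb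
  rcases s with _ | ⟨c, s⟩
  · exact .inl ⟨_, rfl⟩
  · obtain ⟨A, B, hAB⟩ :
        ∃ A B, List.range ((c :: s ++ b :: t).length - 1) = A ++ s.length :: B :=
      List.append_of_mem (by simp)
    have hhead : ((c :: s ++ b :: t).rotate (s.length + 1)).take 1 = [b] := by
      rw [show s.length + 1 = (c :: s).length from rfl, List.rotate_append_length_eq]
      rfl
    refine .inr ⟨s.length + 1, ?_⟩
    rw [rotationPieces, hAB, List.flatMap_append, List.flatMap_cons, hhead, ← List.cons_append]
    exact ⟨_, _, rfl⟩

end RotationPieces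

section BoxWord

variable {α β : Type*}

def boxWord (w₁ σ : List α) (τ w₂ : List β) : List (α × β) :=
  w₁ ×ˢ τ ++ (rotationPieces τ).flatMap (σ ×ˢ ·) ++ (w₂ ×ˢ σ).map Prod.swap

theorem filterMap_partialInvMk_boxWord [DecidableEq α] {σ : List α} (hσ : σ.Nodup) {x : α}
    (hx : x ∈ σ) (w₁ : List α) (τ w₂ : List β) :
    (boxWord w₁ σ τ w₂).filterMap (partialInvMk x) =
      (List.replicate (w₁.count x + τ.length) τ).flatten ++ w₂ := by
  rw [boxWord, List.filterMap_append, List.filterMap_append, filterMap_partialInvMk_product,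
    List.filterMap_flatMap, List.filterMap_map, partialInvMk_comp_swap,
    filterMap_partialInvGraph_product _ _ hσ]
  simp [filterMap_partialInvMk_product, hσ.count, hx, flatten_rotationPieces,
    ← List.replicate_append_replicate]

theorem filterMap_partialInvGraph_boxWord [DecidableEq β] (φ : α → β) {τ : List β}
    (hτ : τ.Nodup) (hτmem : ∀ u, u ∈ τ) (w₁ σ : List α) (w₂ : List β) :
    (boxWord w₁ σ τ w₂).filterMap (partialInvGraph φ) =
      w₁ ++ (rotationPieces τ).flatMap (fun L => σ.filter fun z => φ z ∈ L) ++
        ((w₂ ×ˢ σ).map Prod.swap).filterMap (partialInvGraph φ) := by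
  rw [boxWord, List.filterMap_append, List.filterMap_append,
    filterMap_partialInvGraph_product _ _ hτ, List.filterMap_flatMap,
    List.filter_eq_self.2 (by simp [hτmem])]
  congr 2
  exact List.flatMap_congr fun L hL =>
    filterMap_partialInvGraph_product _ _ (nodup_of_mem_rotationPieces hτ hL)

theorem exists_filterMap_partialInvGraph_const_boxWord [DecidableEq α] [DecidableEq β] (a : β)
    {τ : List β} (hτ : τ.Nodup) (hτmem : ∀ u, u ∈ τ) (w₁ σ : List α) (w₂ : List β) :
    ∃ m, (boxWord w₁ σ τ w₂).filterMap (partialInvGraph fun _ => a) =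
      w₁ ++ (List.replicate m σ).flatten := by
  refine ⟨(rotationPieces τ).countP (fun L => a ∈ L) + w₂.count a, ?_⟩
  rw [filterMap_partialInvGraph_boxWord _ hτ hτmem, flatMap_filter_const, List.filterMap_map,
    partialInvGraph_const_comp_swap, filterMap_partialInvMk_product, List.append_assoc,
    ← List.flatten_append, ← List.replicate_add]

theorem count_boxWord [DecidableEq α] [DecidableEq β] {σ : List α} (hσ : σ.Nodup)
    (hσmem : ∀ v, v ∈ σ) {τ : List β} (hτ : τ.Nodup) (hτmem : ∀ u, u ∈ τ) (w₁ : List α)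
    (w₂ : List β) (p : α × β) :
    (boxWord w₁ σ τ w₂).count p = w₁.count p.1 + τ.length + w₂.count p.2 := by
  obtain ⟨x, a⟩ := p
  rw [← count_filterMap_of_isPartialInv (isPartialInv_partialInvMk x) a,
    filterMap_partialInvMk_boxWord hσ (hσmem x), List.count_append, List.count_flatten]
  simp [hτ.count, hτmem]

theorem alternates_boxWord_row_iff [DecidableEq α] [DecidableEq β] {σ : List α}
    (hσ : σ.Nodup) {x : α} (hx : x ∈ σ) {τ : List β} (hτ : τ.Nodup) {a b : β}
    (hab : [a, b] <+ τ) (w₁ : List α) {w₂ : List β}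
    (hw₂ : (w₂.filter fun z => decide (z = a ∨ z = b)).head? = some a) :
    Alternates (x, a) (x, b) (boxWord w₁ σ τ w₂) ↔ Alternates a b w₂ := by
  have hne : a ≠ b := by simpa using hab.nodup hτ
  rw [← alternates_filterMap_iff (isPartialInv_partialInvMk x),
    filterMap_partialInvMk_boxWord hσ hx,
    alternates_append_iff_of_head? hne (filter_flatten_replicate hτ hab _) hw₂]

theorem alternates_boxWord_column_iff [DecidableEq α] [DecidableEq β] {σ : List α}
    (hσ : σ.Nodup) {x y : α} (hxy : [x, y] <+ σ) {τ : List β} (hτ : τ.Nodup)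
    (hτmem : ∀ u, u ∈ τ) (a : β) {w₁ : List α}
    (hw₁ : (w₁.filter fun z => decide (z = x ∨ z = y)).getLast? = some y) (w₂ : List β) :
    Alternates (x, a) (y, a) (boxWord w₁ σ τ w₂) ↔ Alternates x y w₁ := by
  have hne : x ≠ y := by simpa using hxy.nodup hσ
  obtain ⟨m, hm⟩ := exists_filterMap_partialInvGraph_const_boxWord a hτ hτmem w₁ σ w₂
  refine (alternates_filterMap_iff (isPartialInv_partialInvGraph fun _ => a) x y _).symm.trans ?_
  rw [hm, alternates_append_iff_of_getLast? hne (filter_flatten_replicate hσ hxy m) hw₁]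

theorem not_alternates_boxWord_of_ne [DecidableEq α] [DecidableEq β] {σ : List α}
    (hσ : σ.Nodup) {x y : α} (hxy : [x, y] <+ σ) {τ : List β} (hτ : τ.Nodup)
    (hτmem : ∀ u, u ∈ τ) {a b : β} (hab : a ≠ b) {w₁ : List α}
    (hw₁ : (w₁.filter fun z => decide (z = x ∨ z = y)).getLast? = some y) (w₂ : List β) :
    ¬Alternates (x, a) (y, b) (boxWord w₁ σ τ w₂) := by
  have hne : x ≠ y := by simpa using hxy.nodup hσ
  set φ : α → β := fun z => if z = x then a else b
  have hφx : φ x = a := if_pos rfl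
  have hφy : φ y = b := if_neg hne.symm
  have h := alternates_filterMap_iff (isPartialInv_partialInvGraph φ) x y (boxWord w₁ σ τ w₂)
  simp only [hφx, hφy] at h
  rw [← h, filterMap_partialInvGraph_boxWord φ hτ hτmem, alternates_iff_isChain]
  intro hchain
  have hrot (j : ℕ) : ((σ.filter fun z => φ z ∈ τ.rotate j).filter
      fun z => decide (z = x ∨ z = y)) = [x, y] := by
    rw [show (σ.filter fun z => φ z ∈ τ.rotate j) = σ from List.filter_eq_self.2 (by simp [hτmem]),
      filter_eq_pair_of_sublist hσ hxy]
  have hsingle : ((σ.filter fun z => φ z ∈ [b]).filter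
      fun z => decide (z = x ∨ z = y)) = [y] :=
    filter_filter_eq_singleton hσ (hxy.subset (by simp)) (by simp [hφx, hab]) (by simp [hφy])
  obtain ⟨l, hl⟩ := List.getLast?_eq_some_iff.1 hw₁
  suffices [y, y] <:+: _ by simpa using hchain.infix this
  rcases rotationPieces_eq_of_mem (hτmem b) with ⟨B, hB⟩ | ⟨j, A, B, hB⟩
  · simp only [hB, List.flatMap_cons, List.filter_append, hsingle, hl]
    exact ⟨l, _, by simp only [List.append_assoc, List.cons_append, List.nil_append]; rfl⟩
  · simp only [hB, List.flatMap_append, List.flatMap_cons, List.filter_append, hrot, hsingle]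
    exact ⟨_ ++ (_ ++ [x]), _, by
      simp only [List.append_assoc, List.cons_append, List.nil_append]; rfl⟩

def boxOrder (σ : List α) (τ : List β) (p q : α × β) : Prop :=
  [p.1, q.1] <+ σ ∨ p.1 = q.1 ∧ [p.2, q.2] <+ τ

theorem boxOrder_total {σ : List α} (hσmem : ∀ v, v ∈ σ) {τ : List β} (hτmem : ∀ u, u ∈ τ)
    {p q : α × β} (hpq : p ≠ q) : boxOrder σ τ p q ∨ boxOrder σ τ q p := by
  obtain ⟨x, a⟩ := p
  obtain ⟨y, b⟩ := q
  by_cases hxy : x = y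
  · subst hxy
    have hab : a ≠ b := fun h => hpq (h ▸ rfl)
    rcases pair_sublist_or_pair_sublist (hτmem a) (hτmem b) hab with h | h
    · exact .inl (.inr ⟨rfl, h⟩)
    · exact .inr (.inr ⟨rfl, h⟩)
  · rcases pair_sublist_or_pair_sublist (hσmem x) (hσmem y) hxy with h | h
    · exact .inl (.inl h)
    · exact .inr (.inl h)

theorem represents_boxWord [DecidableEq α] [DecidableEq β] {G : SimpleGraph α}
    {H : SimpleGraph β} {w₁ : List α} {w₂ : List β} (h₁ : Represents G w₁)
    (h₂ : Represents H w₂) :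
    Represents (G □ H) (boxWord w₁ w₁.dedup w₂.reverse.dedup.reverse w₂) := by
  set σ := w₁.dedup
  set τ := w₂.reverse.dedup.reverse
  have hσ : σ.Nodup := List.nodup_dedup _
  have hσmem : ∀ v, v ∈ σ := fun v => List.mem_dedup.2 (h₁.1 v)
  have hτ : τ.Nodup := List.nodup_reverse.2 (List.nodup_dedup _)
  have hτmem : ∀ u, u ∈ τ := by simp [τ, h₂.1]
  refine represents_of_total (boxOrder σ τ)
    (fun p => List.mem_append_left _ (List.mem_append_left _
      (List.mem_product.2 ⟨h₁.1 p.1, hτmem p.2⟩)))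
    (fun p q hpq => boxOrder_total hσmem hτmem hpq) ?_
  rintro ⟨x, a⟩ ⟨y, b⟩ - (hxy | ⟨rfl, hab⟩)
  · have hne : x ≠ y := by simpa using hxy.nodup hσ
    have hw₁ := getLast?_filter_of_sublist_dedup hxy
    by_cases hab : a = b
    · subst hab
      rw [alternates_boxWord_column_iff hσ hxy hτ hτmem a hw₁, ← h₁.2 x y hne]
      simp [boxProd_adj, hne]
    · simpa [boxProd_adj, hne, hab] using
        not_alternates_boxWord_of_ne hσ hxy hτ hτmem hab hw₁ w₂
  · have hne : a ≠ b := by simpa using hab.nodup hτ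
    rw [alternates_boxWord_row_iff hσ (hσmem x) hτ hab w₁
      (head?_filter_of_sublist_reverse_dedup_reverse hab), ← h₂.2 a b hne]
    simp [boxProd_adj]

theorem exists_represents_boxProd [DecidableEq α] [DecidableEq β] [Fintype β]
    {G : SimpleGraph α} {H : SimpleGraph β} {w₁ : List α} {w₂ : List β}
    (h₁ : Represents G w₁) (h₂ : Represents H w₂) :
    ∃ w, Represents (G □ H) w ∧
      ∀ p : α × β, w.count p = w₁.count p.1 + Fintype.card β + w₂.count p.2 := by
  have hτ : w₂.reverse.dedup.reverse.Nodup := List.nodup_reverse.2 (List.nodup_dedup _)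
  have hτmem : ∀ u, u ∈ w₂.reverse.dedup.reverse := by simp [h₂.1]
  refine ⟨_, represents_boxWord h₁ h₂, fun p => ?_⟩
  rw [count_boxWord (List.nodup_dedup _) (fun v => List.mem_dedup.2 (h₁.1 v)) hτ hτmem,
    hτ.length_eq_card hτmem]

end BoxWord

theorem stmt16 {U : Type*} [Fintype V] [Fintype U] [DecidableEq V] [DecidableEq U]
    (G : SimpleGraph V) (H : SimpleGraph U) (k₁ k₂ : ℕ)
    (hk₁ : (∃ w : List V, Represents G w ∧ ∀ v : V, w.count v = k₁) ∧
      ∀ k : ℕ, (∃ w : List V, Represents G w ∧ ∀ v : V, w.count v = k) → k₁ ≤ k)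
    (hk₂ : (∃ w : List U, Represents H w ∧ ∀ v : U, w.count v = k₂) ∧
      ∀ k : ℕ, (∃ w : List U, Represents H w ∧ ∀ v : U, w.count v = k) → k₂ ≤ k) :
    ∃ w : List (V × U), Represents (G □ H) w ∧
      ∀ p : V × U, w.count p = k₁ + k₂ + min (Fintype.card V) (Fintype.card U) := by
  obtain ⟨⟨w₁, h₁, hc₁⟩, -⟩ := hk₁
  obtain ⟨⟨w₂, h₂, hc₂⟩, -⟩ := hk₂
  rcases le_total (Fintype.card U) (Fintype.card V) with h | h
  · obtain ⟨w, hw, hcount⟩ := exists_represents_boxProd h₁ h₂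
    exact ⟨w, hw, fun p => by rw [hcount, hc₁, hc₂, min_eq_right h]; ring⟩
  · obtain ⟨w, hw, hcount⟩ := exists_represents_boxProd h₂ h₁
    refine ⟨w.map (boxProdComm H G), hw.map_iso _, fun p => ?_⟩
    rw [show p = boxProdComm H G p.swap from rfl,
      List.count_map_of_injective _ _ (boxProdComm H G).injective, hcount, hc₁, hc₂,
      min_eq_left h]
    ring
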